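/- Let a ∈ ℝ and let I be an interval with least element a, nonempty interior, and I ⊂ [a,∞). If α > 0 and q : I → ℝ is locally essentially bounded on I, then I^α_{a+}[q] (everywhere defined by the integral formula) is locally Hölder continuous of exponent min(α,1) and vanishes at a: for every compact subinterval [a,b] ⊂ I there exists C ≥ 0 such that |I^α_{a+}[q](t₂) − I^α_{a+}[q](t₁)| ≤ C·|t₂ − t₁|^{min(α,1)} for all t₁, t₂ ∈ [a,b], and I^α_{a+}[q](a) = 0. -/

import Mathlib

open MeasureTheory Set

/-- Left Riemann–Liouville fractional integral of order `α` with base point `a`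
(for `α = 0` it is the identity). -/
noncomputable def rlInt (a α : ℝ) (q : ℝ → ℝ) (t : ℝ) : ℝ :=
  if α = 0 then q t else (1 / Real.Gamma α) * ∫ τ in a..t, (t - τ) ^ (α - 1) * q τ

/-- `q` is locally essentially bounded on the interval `I` with least element `a`:
it is (measurable and) essentially bounded on every compact subinterval `[a, b] ⊆ I`. -/
def LocEssBddOn (a : ℝ) (I : Set ℝ) (q : ℝ → ℝ) : Prop :=
  ∀ b ∈ I,
    MeasureTheory.AEStronglyMeasurable q (MeasureTheory.volume.restrict (Set.Icc a b)) ∧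
    ∃ M : ℝ, ∀ᵐ t ∂(MeasureTheory.volume.restrict (Set.Icc a b)), |q t| ≤ M


/-!
For `t₁ ≤ t₂` in `[a, b]`, split `Γ(α) (I^α q (t₂) - I^α q (t₁))` into
`∫_a^{t₁} ((t₂ - τ)^{α-1} - (t₁ - τ)^{α-1}) q τ dτ + ∫_{t₁}^{t₂} (t₂ - τ)^{α-1} q τ dτ`.
With `|q| ≤ M` both pieces are bounded by `M` times integrals of the kernel that can be computed
explicitly, since the kernel difference has constant sign. This gives the bound
`M/α (|(t₂-a)^α - (t₁-a)^α - (t₂-t₁)^α| + (t₂-t₁)^α)`, and `s ↦ s^α` is Hölder of exponent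
`min α 1` on `[0, b - a]`: subadditive for `α ≤ 1`, Lipschitz for `α ≥ 1`.
-/

open intervalIntegral

theorem intervalIntegrable_sub_rpow {α : ℝ} (hα : 0 < α) (t c d : ℝ) :
    IntervalIntegrable (fun τ => (t - τ) ^ (α - 1)) volume c d := by
  simpa using (intervalIntegrable_rpow' (a := t - c) (b := t - d) (r := α - 1)
    (by linarith)).comp_sub_left t

theorem integral_sub_rpow {α : ℝ} (hα : 0 < α) (t c d : ℝ) :
    ∫ τ in c..d, (t - τ) ^ (α - 1) = ((t - c) ^ α - (t - d) ^ α) / α := by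
  rw [integral_comp_sub_left (fun s => s ^ (α - 1)) t,
    integral_rpow (Or.inl (by linarith)), sub_add_cancel]

theorem integral_abs_eq_abs_integral_of_Ioo {f : ℝ → ℝ} {a b : ℝ} (hab : a ≤ b)
    (hf : (∀ x ∈ Ioo a b, 0 ≤ f x) ∨ ∀ x ∈ Ioo a b, f x ≤ 0) :
    ∫ x in a..b, |f x| = |∫ x in a..b, f x| := by
  have hnonneg : 0 ≤ ∫ x in a..b, |f x| := integral_nonneg hab fun _ _ => abs_nonneg _
  rcases hf with hf | hf
  · have h : ∫ x in a..b, |f x| = ∫ x in a..b, f x :=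
      integral_congr_Ioo_of_le hab fun x hx => abs_of_nonneg (hf x hx)
    rw [h, abs_of_nonneg (h ▸ hnonneg)]
  · have h : ∫ x in a..b, |f x| = -∫ x in a..b, f x := by
      rw [← intervalIntegral.integral_neg]
      exact integral_congr_Ioo_of_le hab fun x hx => abs_of_nonpos (hf x hx)
    rw [h, abs_of_nonpos (by linarith)]

theorem integral_abs_sub_rpow_sub_sub_rpow {α a t₁ t₂ : ℝ} (hα : 0 < α) (ha : a ≤ t₁)
    (h12 : t₁ ≤ t₂) :
    ∫ τ in a..t₁, |(t₂ - τ) ^ (α - 1) - (t₁ - τ) ^ (α - 1)|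
      = |(t₂ - a) ^ α - (t₁ - a) ^ α - (t₂ - t₁) ^ α| / α := by
  have hsign : (∀ τ ∈ Ioo a t₁, 0 ≤ (t₂ - τ) ^ (α - 1) - (t₁ - τ) ^ (α - 1)) ∨
      ∀ τ ∈ Ioo a t₁, (t₂ - τ) ^ (α - 1) - (t₁ - τ) ^ (α - 1) ≤ 0 := by
    rcases le_total 1 α with h | h
    · exact .inl fun τ hτ => sub_nonneg.2 <|
        Real.rpow_le_rpow (by linarith [hτ.2]) (by linarith) (by linarith)
    · exact .inr fun τ hτ => sub_nonpos.2 <|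
        Real.rpow_le_rpow_of_nonpos (by linarith [hτ.2]) (by linarith) (by linarith)
  rw [integral_abs_eq_abs_integral_of_Ioo ha hsign,
    integral_sub (intervalIntegrable_sub_rpow hα _ _ _) (intervalIntegrable_sub_rpow hα _ _ _),
    integral_sub_rpow hα, integral_sub_rpow hα, sub_self, Real.zero_rpow hα.ne', ← sub_div,
    abs_div, abs_of_pos hα]
  ring_nf

theorem rpow_sub_rpow_le_of_one_le {α L x y : ℝ} (hα : 1 ≤ α) (hy : 0 ≤ y) (hyx : y ≤ x)
    (hxL : x ≤ L) :
    x ^ α - y ^ α ≤ α * L ^ (α - 1) * (x - y) := by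
  have hint : ∫ s in y..x, s ^ (α - 1) = (x ^ α - y ^ α) / α := by
    rw [integral_rpow (Or.inl (by linarith)), sub_add_cancel]
  have hbound : ∫ s in y..x, s ^ (α - 1) ≤ ∫ _ in y..x, L ^ (α - 1) :=
    integral_mono_on hyx (intervalIntegrable_rpow' (by linarith)) intervalIntegrable_const
      fun s hs => Real.rpow_le_rpow (hy.trans hs.1) (hs.2.trans hxL) (by linarith)
  rw [hint, intervalIntegral.integral_const, smul_eq_mul, div_le_iff₀ (by linarith)] at hbound
  linarith

theorem exists_abs_rpow_sub_rpow_le {α : ℝ} (hα : 0 < α) (L : ℝ) :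
    ∃ C, 0 ≤ C ∧ ∀ x ∈ Icc 0 L, ∀ y ∈ Icc 0 L, |x ^ α - y ^ α| ≤ C * |x - y| ^ min α 1 := by
  obtain ⟨C, hC, hle⟩ : ∃ C, 0 ≤ C ∧ ∀ x ∈ Icc 0 L, ∀ y ∈ Icc 0 L, y ≤ x →
      x ^ α - y ^ α ≤ C * (x - y) ^ min α 1 := by
    rcases le_total α 1 with h | h
    · refine ⟨1, zero_le_one, fun x _ y hy hyx => ?_⟩
      have := Real.rpow_add_le_add_rpow (sub_nonneg.2 hyx) hy.1 hα.le h
      rw [sub_add_cancel] at this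
      rw [min_eq_left h, one_mul]
      linarith
    · refine ⟨α * |L| ^ (α - 1), by positivity, fun x hx y hy hyx => ?_⟩
      rw [min_eq_right h, Real.rpow_one]
      exact rpow_sub_rpow_le_of_one_le h hy.1 hyx (hx.2.trans (le_abs_self L))
  refine ⟨C, hC, fun x hx y hy => ?_⟩
  wlog hyx : y ≤ x generalizing x y
  · rw [abs_sub_comm, abs_sub_comm x]
    exact this y hy x hx (le_of_not_ge hyx)
  rw [abs_of_nonneg (sub_nonneg.2 (Real.rpow_le_rpow hy.1 hyx hα.le)),
    abs_of_nonneg (sub_nonneg.2 hyx)]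
  exact hle x hx y hy hyx

theorem intervalIntegrable_sub_rpow_mul {q : ℝ → ℝ} {α a b M c d : ℝ} (hα : 0 < α) (t : ℝ)
    (hq : AEStronglyMeasurable q (volume.restrict (Icc a b)))
    (hM : ∀ᵐ τ ∂volume.restrict (Icc a b), |q τ| ≤ M) (hac : a ≤ c) (hcd : c ≤ d)
    (hdb : d ≤ b) :
    IntervalIntegrable (fun τ => (t - τ) ^ (α - 1) * q τ) volume c d := by
  have hsub : Ioc c d ⊆ Icc a b := fun τ hτ => ⟨hac.trans hτ.1.le, hτ.2.trans hdb⟩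
  rw [intervalIntegrable_iff_integrableOn_Ioc_of_le hcd]
  exact (intervalIntegrable_sub_rpow hα t c d).1.mul_bdd
    (hq.mono_measure (Measure.restrict_mono hsub le_rfl))
    (ae_restrict_of_ae_restrict_of_subset hsub hM)

theorem abs_integral_mul_le_mul_integral_abs {g q : ℝ → ℝ} {a b c d M : ℝ}
    (hg : IntervalIntegrable g volume c d) (hM : ∀ᵐ τ ∂volume.restrict (Icc a b), |q τ| ≤ M)
    (hac : a ≤ c) (hcd : c ≤ d) (hdb : d ≤ b) :
    |∫ τ in c..d, g τ * q τ| ≤ M * ∫ τ in c..d, |g τ| := by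
  rw [← Real.norm_eq_abs, ← intervalIntegral.integral_const_mul]
  refine norm_integral_le_of_norm_le hcd ?_ (hg.abs.const_mul M)
  filter_upwards [(ae_restrict_iff' measurableSet_Icc).1 hM] with τ hqτ hτ
  rw [Real.norm_eq_abs, abs_mul, mul_comm]
  exact mul_le_mul_of_nonneg_right (hqτ ⟨hac.trans hτ.1.le, hτ.2.trans hdb⟩) (abs_nonneg _)

theorem abs_integral_sub_rpow_mul_sub_le {q : ℝ → ℝ} {α a b M t₁ t₂ : ℝ} (hα : 0 < α)
    (hq : AEStronglyMeasurable q (volume.restrict (Icc a b)))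
    (hM : ∀ᵐ τ ∂volume.restrict (Icc a b), |q τ| ≤ M) (ha : a ≤ t₁) (h12 : t₁ ≤ t₂)
    (hb : t₂ ≤ b) :
    |(∫ τ in a..t₂, (t₂ - τ) ^ (α - 1) * q τ) - ∫ τ in a..t₁, (t₁ - τ) ^ (α - 1) * q τ|
      ≤ M / α * (|(t₂ - a) ^ α - (t₁ - a) ^ α - (t₂ - t₁) ^ α| + (t₂ - t₁) ^ α) := by
  have hsplit : (∫ τ in a..t₂, (t₂ - τ) ^ (α - 1) * q τ) - ∫ τ in a..t₁, (t₁ - τ) ^ (α - 1) * q τ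
      = (∫ τ in a..t₁, ((t₂ - τ) ^ (α - 1) - (t₁ - τ) ^ (α - 1)) * q τ)
        + ∫ τ in t₁..t₂, (t₂ - τ) ^ (α - 1) * q τ := by
    have h₂ := intervalIntegrable_sub_rpow_mul hα t₂ hq hM le_rfl ha (h12.trans hb)
    have h₁ := intervalIntegrable_sub_rpow_mul hα t₁ hq hM le_rfl ha (h12.trans hb)
    simp_rw [sub_mul]
    rw [integral_sub h₂ h₁,
      ← integral_add_adjacent_intervals h₂ (intervalIntegrable_sub_rpow_mul hα t₂ hq hM ha h12 hb)]
    ring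
  have htail : ∫ τ in t₁..t₂, |(t₂ - τ) ^ (α - 1)| = (t₂ - t₁) ^ α / α := by
    rw [integral_congr fun τ hτ => abs_of_nonneg (Real.rpow_nonneg (by
        rw [uIcc_of_le h12] at hτ; linarith [hτ.2]) _),
      integral_sub_rpow hα, sub_self, Real.zero_rpow hα.ne', sub_zero]
  rw [hsplit]
  calc _ ≤ |∫ τ in a..t₁, ((t₂ - τ) ^ (α - 1) - (t₁ - τ) ^ (α - 1)) * q τ|
        + |∫ τ in t₁..t₂, (t₂ - τ) ^ (α - 1) * q τ| := abs_add_le _ _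
    _ ≤ M * (∫ τ in a..t₁, |(t₂ - τ) ^ (α - 1) - (t₁ - τ) ^ (α - 1)|)
        + M * ∫ τ in t₁..t₂, |(t₂ - τ) ^ (α - 1)| := by
      gcongr
      · exact abs_integral_mul_le_mul_integral_abs
          ((intervalIntegrable_sub_rpow hα _ _ _).sub (intervalIntegrable_sub_rpow hα _ _ _))
          hM le_rfl ha (h12.trans hb)
      · exact abs_integral_mul_le_mul_integral_abs (intervalIntegrable_sub_rpow hα _ _ _)
          hM ha h12 hb
    _ = _ := by
      rw [integral_abs_sub_rpow_sub_sub_rpow hα ha h12, htail]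
      ring

theorem statement1_general (a : ℝ) (I : Set ℝ)
    (α : ℝ) (hα : 0 < α) (q : ℝ → ℝ) (hq : LocEssBddOn a I q) :
    (∀ b ∈ I, ∃ C : ℝ, 0 ≤ C ∧ ∀ t₁ ∈ Set.Icc a b, ∀ t₂ ∈ Set.Icc a b,
      |rlInt a α q t₂ - rlInt a α q t₁| ≤ C * |t₂ - t₁| ^ (min α 1)) ∧
    rlInt a α q a = 0 := by
  refine ⟨fun b hb => ?_, by simp [rlInt, hα.ne']⟩
  obtain ⟨hmeas, M, hM⟩ := hq b hb
  replace hM : ∀ᵐ τ ∂volume.restrict (Icc a b), |q τ| ≤ |M| :=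
    hM.mono fun τ h => h.trans (le_abs_self M)
  obtain ⟨C, hC, hpow⟩ := exists_abs_rpow_sub_rpow_le hα (b - a)
  have hΓ := Real.Gamma_pos_of_pos hα
  refine ⟨(Real.Gamma α)⁻¹ * (|M| / α * (3 * C)), by positivity, fun t₁ ht₁ t₂ ht₂ => ?_⟩
  wlog h12 : t₁ ≤ t₂ generalizing t₁ t₂
  · rw [abs_sub_comm, abs_sub_comm t₂]
    exact this t₂ ht₂ t₁ ht₁ (le_of_not_ge h12)
  have hδ : (t₂ - t₁) ^ α ≤ C * |t₂ - t₁| ^ min α 1 := by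
    simpa [Real.zero_rpow hα.ne', abs_of_nonneg (Real.rpow_nonneg (sub_nonneg.2 h12) α)] using
      hpow (t₂ - t₁) ⟨by linarith, by linarith [ht₁.1, ht₂.2]⟩ 0
        ⟨le_rfl, by linarith [ht₁.1, ht₁.2]⟩
  have hgrowth : |(t₂ - a) ^ α - (t₁ - a) ^ α| ≤ C * |t₂ - t₁| ^ min α 1 := by
    simpa using hpow (t₂ - a) ⟨by linarith [ht₂.1], by linarith [ht₂.2]⟩ (t₁ - a)
      ⟨by linarith [ht₁.1], by linarith [ht₁.2]⟩
  have hsum : |(t₂ - a) ^ α - (t₁ - a) ^ α - (t₂ - t₁) ^ α| + (t₂ - t₁) ^ α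
      ≤ 3 * C * |t₂ - t₁| ^ min α 1 := by
    have := abs_sub ((t₂ - a) ^ α - (t₁ - a) ^ α) ((t₂ - t₁) ^ α)
    rw [abs_of_nonneg (Real.rpow_nonneg (sub_nonneg.2 h12) α)] at this
    linarith
  simp only [rlInt, if_neg hα.ne', one_div, ← mul_sub, abs_mul, abs_inv, abs_of_pos hΓ]
  calc _ ≤ (Real.Gamma α)⁻¹ * (|M| / α * (3 * C * |t₂ - t₁| ^ min α 1)) := by
        gcongr
        exact (abs_integral_sub_rpow_mul_sub_le hα hmeas hM ht₁.1 h12 ht₂.2).trans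
          (by gcongr)
    _ = _ := by ring

theorem statement1 (a : ℝ) (I : Set ℝ)
    (haI : a ∈ I) (hIsub : I ⊆ Set.Ici a) (hIint : (interior I).Nonempty)
    (hIord : I.OrdConnected)
    (α : ℝ) (hα : 0 < α) (q : ℝ → ℝ) (hq : LocEssBddOn a I q) :
    (∀ b ∈ I, ∃ C : ℝ, 0 ≤ C ∧ ∀ t₁ ∈ Set.Icc a b, ∀ t₂ ∈ Set.Icc a b,
      |rlInt a α q t₂ - rlInt a α q t₁| ≤ C * |t₂ - t₁| ^ (min α 1)) ∧
    rlInt a α q a = 0 :=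
  statement1_general a I α hα q hq
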